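/- arXiv:2502.20063 — 2 statements merged into one kernel-verified Lean document; each statement's English description precedes it below -/
import Mathlib

section
/- Fix a density φ, a capacity c ∈ (0,1), and the independent decision rule U_n(s) = (1−(1−s)^n)/n. For each N, let f_N be a Nash equilibrium of the N-firm instance with thresholds τ given by the Nash equilibrium characterization, and write M = Mmax(f_N). Then τ_{M−1} ≤ 1 − M^{−1/(M−1)}, and consequently lim_{N → ∞} τ_{Mmax(f_N)−1} = 0. -/
open MeasureTheory Set Filter Topology

noncomputable section

/-- The measure of a set `A` under the score density `φ`. -/
def dMeas (φ : ℝ → ℝ) (A : Set ℝ) : ℝ := ∫ s in A, φ s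

/-- `K` is a finite union of closed intervals. -/
def FinUnionIntervals (K : Set ℝ) : Prop :=
  ∃ (n : ℕ) (a b : Fin n → ℝ), K = ⋃ i, Set.Icc (a i) (b i)

/-- A feasible strategy: a finite union of closed intervals inside `[0,1]`
with `φ`-measure at most the capacity `c`. -/
def Feasible (φ : ℝ → ℝ) (c : ℝ) (K : Set ℝ) : Prop :=
  K ⊆ Set.Icc (0:ℝ) 1 ∧ FinUnionIntervals K ∧ dMeas φ K ≤ c

/-- `M(s;K)`: the number of firms interviewing an applicant with score `s`. -/
def numFirms {N : ℕ} (K : Fin N → Set ℝ) (s : ℝ) : ℕ :=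
  Nat.card {i : Fin N // s ∈ K i}

/-- `Mmax(K)`: the maximal congestion over scores in `[0,1]`. -/
def maxFirms {N : ℕ} (K : Fin N → Set ℝ) : ℕ :=
  sSup ((fun s => numFirms K s) '' Set.Icc (0:ℝ) 1)

/-- Firm `i`'s expected utility under the profile `K`. -/
def utility (φ : ℝ → ℝ) (U : ℕ → ℝ → ℝ) {N : ℕ} (K : Fin N → Set ℝ) (i : Fin N) : ℝ :=
  ∫ s in K i, U (numFirms K s) s * φ s

/-- Social welfare: the total utility of all firms. -/
def SW (φ : ℝ → ℝ) (U : ℕ → ℝ → ℝ) {N : ℕ} (K : Fin N → Set ℝ) : ℝ :=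
  ∑ i, utility φ U K i

/-- Nash equilibrium: every strategy is feasible and no firm can strictly
increase its utility by a unilateral feasible deviation. -/
def NashEq (φ : ℝ → ℝ) (c : ℝ) (U : ℕ → ℝ → ℝ) {N : ℕ} (K : Fin N → Set ℝ) : Prop :=
  (∀ i, Feasible φ c (K i)) ∧
  ∀ (i : Fin N) (K' : Set ℝ), Feasible φ c K' →
    utility φ U (Function.update K i K') i ≤ utility φ U K i

/-- Correlated decision rule: `U_n(s) = s / n`. -/
def Ucorr : ℕ → ℝ → ℝ := fun n s => s / n

/-- Independent decision rule: `U_n(s) = (1 - (1-s)^n) / n`. -/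
def Uindep : ℕ → ℝ → ℝ := fun n s => (1 - (1 - s) ^ n) / n

/-- The threshold structure associated with a Nash equilibrium:
`τ 0 = 0`, `τ (N+1) = 1`, the thresholds are nondecreasing, every firm uses its
full capacity, exactly `m` firms interview scores in `[τ m, τ (m+1))`, and the
utilities at the thresholds are nondecreasing. -/
def IsThresholds (φ : ℝ → ℝ) (c : ℝ) (U : ℕ → ℝ → ℝ) {N : ℕ}
    (K : Fin N → Set ℝ) (τ : ℕ → ℝ) : Prop :=
  τ 0 = 0 ∧ τ (N + 1) = 1 ∧ (∀ k, k ≤ N → τ k ≤ τ (k + 1)) ∧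
  (∀ i, dMeas φ (K i) = c) ∧
  (∀ m, m ≤ maxFirms K → ∀ s ∈ Set.Ico (τ m) (τ (m + 1)), numFirms K s = m) ∧
  (∀ n m, 1 ≤ n → n < m → m ≤ maxFirms K → U n (τ n) ≤ U m (τ m))

/-!
Along the thresholds the utilities increase, so `U_{M-1}(τ_{M-1}) ≤ U_M(τ_M) ≤ 1/M`; for the
independent rule this reads `(1 - τ_{M-1})^{M-1} ≥ 1/M`, i.e. `τ_{M-1} ≤ 1 - M^{-1/(M-1)}`.
Every firm uses its full capacity `c` and no score is interviewed by more than `M` firms, so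
`N c ≤ M`; hence `M → ∞` along the sequence, and `1 - M^{-1/(M-1)} → 0`.
-/

section Congestion

variable {N : ℕ} (K : Fin N → Set ℝ)

lemma numFirms_le (s : ℝ) : numFirms K s ≤ N := by
  classical
  simpa [numFirms, Nat.card_eq_fintype_card] using
    Fintype.card_subtype_le (fun i : Fin N => s ∈ K i)

lemma maxFirms_le : maxFirms K ≤ N :=
  csSup_le ⟨numFirms K 0, 0, by norm_num, rfl⟩ <| by
    rintro _ ⟨s, -, rfl⟩
    exact numFirms_le K s

lemma numFirms_le_maxFirms {s : ℝ} (hs : s ∈ Icc (0:ℝ) 1) : numFirms K s ≤ maxFirms K :=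
  le_csSup ⟨N, by rintro _ ⟨s', -, rfl⟩; exact numFirms_le K s'⟩ ⟨s, hs, rfl⟩

lemma sum_indicator_eq_numFirms_mul (g : ℝ → ℝ) (s : ℝ) :
    ∑ i, (K i).indicator g s = numFirms K s * g s := by
  classical
  simp [indicator_apply, Finset.sum_ite, numFirms, Nat.card_eq_fintype_card, Fintype.card_subtype]

lemma sum_dMeas_le_maxFirms_mul {φ : ℝ → ℝ} (hφ : IntegrableOn φ (Icc 0 1))
    (hφ_nonneg : ∀ s ∈ Icc (0:ℝ) 1, 0 ≤ φ s) (hK : ∀ i, MeasurableSet (K i))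
    (hK_sub : ∀ i, K i ⊆ Icc 0 1) :
    ∑ i, dMeas φ (K i) ≤ maxFirms K * ∫ s in Icc (0:ℝ) 1, φ s := by
  have hind : ∀ i, IntegrableOn ((K i).indicator φ) (Icc 0 1) := fun i => hφ.indicator (hK i)
  calc ∑ i, dMeas φ (K i) = ∑ i, ∫ s in Icc (0:ℝ) 1, (K i).indicator φ s := by
        refine Finset.sum_congr rfl fun i _ => ?_
        rw [setIntegral_indicator (hK i), inter_eq_self_of_subset_right (hK_sub i), dMeas]
    _ = ∫ s in Icc (0:ℝ) 1, (numFirms K s : ℝ) * φ s := by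
        rw [← integral_finsetSum _ fun i _ => hind i]
        simp only [sum_indicator_eq_numFirms_mul]
    _ ≤ ∫ s in Icc (0:ℝ) 1, (maxFirms K : ℝ) * φ s := by
        refine setIntegral_mono_on ?_ (hφ.const_mul _) measurableSet_Icc fun s hs => ?_
        · exact (integrable_finsetSum Finset.univ fun i _ => hind i).congr
            (ae_of_all _ (sum_indicator_eq_numFirms_mul K φ))
        · exact mul_le_mul_of_nonneg_right (mod_cast numFirms_le_maxFirms K hs) (hφ_nonneg s hs)
    _ = maxFirms K * ∫ s in Icc (0:ℝ) 1, φ s := integral_const_mul _ _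

end Congestion

lemma Feasible.measurableSet {φ : ℝ → ℝ} {c : ℝ} {K : Set ℝ} (h : Feasible φ c K) :
    MeasurableSet K := by
  obtain ⟨-, ⟨n, a, b, rfl⟩, -⟩ := h
  exact .iUnion fun _ => measurableSet_Icc

lemma natCast_mul_le_maxFirms {φ : ℝ → ℝ} (hφ_nonneg : ∀ s ∈ Icc (0:ℝ) 1, 0 ≤ φ s)
    (hφ_int : ∫ s in Icc (0:ℝ) 1, φ s = 1) {c : ℝ} {N : ℕ} {K : Fin N → Set ℝ}
    (hfeas : ∀ i, Feasible φ c (K i)) (hcap : ∀ i, dMeas φ (K i) = c) :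
    N * c ≤ maxFirms K := by
  have hφ : IntegrableOn φ (Icc 0 1) := by
    by_contra h
    simp [integral_undef h] at hφ_int
  simpa [hcap, hφ_int] using sum_dMeas_le_maxFirms_mul K hφ hφ_nonneg
    (fun i => (hfeas i).measurableSet) (fun i => (hfeas i).1)

lemma Uindep_le_inv {n : ℕ} {s : ℝ} (hs : s ≤ 1) : Uindep n s ≤ 1 / n := by
  unfold Uindep
  gcongr
  linarith [pow_nonneg (sub_nonneg.mpr hs) n]

lemma le_one_sub_rpow_of_Uindep_le {M : ℕ} (hM : 2 ≤ M) {t : ℝ} (ht : t ≤ 1)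
    (h : Uindep (M - 1) t ≤ 1 / M) :
    t ≤ 1 - (M : ℝ) ^ (-(1 : ℝ) / ((M : ℝ) - 1)) := by
  have hM0 : (0 : ℝ) < M := by positivity
  have hm : ((M - 1 : ℕ) : ℝ) = M - 1 := by push_cast [Nat.cast_sub (by omega : 1 ≤ M)]; ring
  have hm0 : (0 : ℝ) < M - 1 := by rw [← hm]; exact_mod_cast (by omega : 0 < M - 1)
  have hpow : (M : ℝ)⁻¹ ≤ (1 - t) ^ ((M : ℝ) - 1) := by
    rw [← hm, Real.rpow_natCast]
    unfold Uindep at h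
    rw [hm, div_le_div_iff₀ hm0 hM0] at h
    rw [inv_eq_one_div, div_le_iff₀ hM0]
    linarith
  have hroot : (M : ℝ) ^ (-(1 : ℝ) / ((M : ℝ) - 1)) = (M : ℝ)⁻¹ ^ ((M : ℝ) - 1)⁻¹ := by
    rw [Real.inv_rpow hM0.le, ← Real.rpow_neg hM0.le, neg_div, one_div]
  have hroot_le :=
    (Real.rpow_inv_le_iff_of_pos (inv_nonneg.mpr hM0.le) (sub_nonneg.mpr ht) hm0).mpr hpow
  linarith

lemma tendsto_one_sub_rpow_neg_inv_sub_one :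
    Tendsto (fun M : ℕ => 1 - (M : ℝ) ^ (-(1 : ℝ) / ((M : ℝ) - 1))) atTop (𝓝 0) := by
  have h := (tendsto_rpow_div_mul_add (-1) 1 (-1) one_ne_zero.symm).comp
    tendsto_natCast_atTop_atTop
  simpa [Function.comp_def, ← sub_eq_add_neg] using (tendsto_const_nhds (x := (1 : ℝ))).sub h

namespace IsThresholds

variable {φ : ℝ → ℝ} {c : ℝ} {U : ℕ → ℝ → ℝ} {N : ℕ} {K : Fin N → Set ℝ} {τ : ℕ → ℝ}

lemma monotoneOn (h : IsThresholds φ c U K τ) : MonotoneOn τ (Iic (N + 1)) :=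
  monotoneOn_of_le_add_one ordConnected_Iic fun k _ _ hk => h.2.2.1 k (by simp at hk; omega)

lemma nonneg (h : IsThresholds φ c U K τ) {k : ℕ} (hk : k ≤ N + 1) : 0 ≤ τ k :=
  h.1 ▸ h.monotoneOn (by simp) hk (Nat.zero_le k)

lemma le_one (h : IsThresholds φ c U K τ) {k : ℕ} (hk : k ≤ N + 1) : τ k ≤ 1 :=
  h.2.1 ▸ h.monotoneOn hk (by simp) hk

lemma le_one_sub_rpow (h : IsThresholds φ c Uindep K τ) :
    τ (maxFirms K - 1) ≤ 1 - (maxFirms K : ℝ) ^ (-(1 : ℝ) / ((maxFirms K : ℝ) - 1)) := by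
  have hMN := maxFirms_le K
  obtain hM | hM | hM : maxFirms K = 0 ∨ maxFirms K = 1 ∨ 2 ≤ maxFirms K := by omega
  · simp [hM, h.1]
  · simp [hM, h.1]
  · refine le_one_sub_rpow_of_Uindep_le hM (h.le_one (by omega)) ?_
    exact (h.2.2.2.2.2 _ _ (by omega) (by omega) le_rfl).trans (Uindep_le_inv (h.le_one (by omega)))

end IsThresholds

theorem tau_second_highest_vanishes_general
    (φ : ℝ → ℝ)
    (hφpos : ∀ s ∈ Set.Icc (0:ℝ) 1, 0 < φ s)
    (hφint : ∫ s in Set.Icc (0:ℝ) 1, φ s = 1)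
    (c : ℝ) (hc : 0 < c) :
    (∀ (N : ℕ) (K : Fin N → Set ℝ) (τ : ℕ → ℝ), 2 ≤ N →
      NashEq φ c Uindep K → IsThresholds φ c Uindep K τ →
      τ (maxFirms K - 1) ≤
        1 - (maxFirms K : ℝ) ^ (-(1 : ℝ) / ((maxFirms K : ℝ) - 1))) ∧
    (∀ (f : (N : ℕ) → Fin N → Set ℝ) (τ : (N : ℕ) → ℕ → ℝ),
      (∀ N, 2 ≤ N → NashEq φ c Uindep (f N) ∧ IsThresholds φ c Uindep (f N) (τ N)) →
      Tendsto (fun N => τ N (maxFirms (f N) - 1)) atTop (𝓝 0)) := by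
  refine ⟨fun N K τ _ _ hτ => hτ.le_one_sub_rpow, fun f τ heq => ?_⟩
  have hM : Tendsto (fun N => maxFirms (f N)) atTop atTop := by
    refine tendsto_natCast_atTop_iff.mp <| tendsto_atTop_mono' _ ?_
      (tendsto_natCast_atTop_atTop.atTop_mul_const hc)
    filter_upwards [eventually_ge_atTop 2] with N hN
    exact natCast_mul_le_maxFirms (fun s hs => (hφpos s hs).le) hφint (heq N hN).1.1
      (heq N hN).2.2.2.2.1
  refine tendsto_of_tendsto_of_tendsto_of_le_of_le' tendsto_const_nhds
    (tendsto_one_sub_rpow_neg_inv_sub_one.comp hM) ?_ ?_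
  all_goals filter_upwards [eventually_ge_atTop 2] with N hN
  · exact (heq N hN).2.nonneg (by have := maxFirms_le (f N); omega)
  · exact (heq N hN).2.le_one_sub_rpow

/-- **Lemma (the second-highest threshold vanishes, independent rule).**
For a Nash equilibrium of the `N`-firm instance with the independent rule and
thresholds `τ`, writing `M = Mmax`, one has `τ_{M-1} ≤ 1 - M^{-1/(M-1)}`;
consequently, along any sequence of Nash equilibria, `τ_{Mmax(f_N)-1} → 0`. -/
theorem tau_second_highest_vanishes
    (φ : ℝ → ℝ)
    (hφm : Measurable φ) (hφpos : ∀ s ∈ Set.Icc (0:ℝ) 1, 0 < φ s)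
    (hφint : ∫ s in Set.Icc (0:ℝ) 1, φ s = 1)
    (c : ℝ) (hc : 0 < c) (hc1 : c < 1) :
    (∀ (N : ℕ) (K : Fin N → Set ℝ) (τ : ℕ → ℝ), 2 ≤ N →
      NashEq φ c Uindep K → IsThresholds φ c Uindep K τ →
      τ (maxFirms K - 1) ≤
        1 - (maxFirms K : ℝ) ^ (-(1 : ℝ) / ((maxFirms K : ℝ) - 1))) ∧
    (∀ (f : (N : ℕ) → Fin N → Set ℝ) (τ : (N : ℕ) → ℕ → ℝ),
      (∀ N, 2 ≤ N → NashEq φ c Uindep (f N) ∧ IsThresholds φ c Uindep (f N) (τ N)) →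
      Tendsto (fun N => τ N (maxFirms (f N) - 1)) atTop (𝓝 0)) :=
  tau_second_highest_vanishes_general φ hφpos hφint c hc
end
end

section
/- Fix a density φ and the correlated decision rule U_n(s) = s/n, and consider the instance with N firms each of capacity c. If N·c ≤ 1, let s_{Nc} ∈ [0,1] satisfy μ([s_{Nc}, 1]) = N·c; then the supremum of the social welfare over all feasible strategy profiles equals ∫_{s_{Nc}}^1 s φ(s) ds, and this supremum is attained. If N·c > 1, the supremum of the social welfare over all feasible strategy profiles equals E[S] = ∫₀¹ s φ(s) ds, and it is attained. -/
open MeasureTheory Set Filter Topology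

noncomputable section

/-- The smallest social welfare attained at a Nash equilibrium. -/
def SWNE (φ : ℝ → ℝ) (c : ℝ) (U : ℕ → ℝ → ℝ) (N : ℕ) : ℝ :=
  sInf {w | ∃ K : Fin N → Set ℝ, NashEq φ c U K ∧ SW φ U K = w}

/-- The naive cutoff `s_c`, i.e. the score with `μ([s_c, 1]) = c`. -/
def sCut (φ : ℝ → ℝ) (c : ℝ) : ℝ :=
  sInf {x | x ∈ Set.Icc (0:ℝ) 1 ∧ dMeas φ (Set.Icc x 1) = c}

/-- Social welfare of the naive profile, in which every firm interviews `[s_c, 1]`. -/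
def SWnaive (φ : ℝ → ℝ) (c : ℝ) (U : ℕ → ℝ → ℝ) (N : ℕ) : ℝ :=
  SW φ U (fun _ : Fin N => Set.Icc (sCut φ c) 1)

/-- Price of Naive Selection. -/
def PoNS (φ : ℝ → ℝ) (c : ℝ) (U : ℕ → ℝ → ℝ) (N : ℕ) : ℝ :=
  SWNE φ c U N / SWnaive φ c U N

/-- The supremum of social welfare over all feasible profiles. -/
def SWmax (φ : ℝ → ℝ) (c : ℝ) (U : ℕ → ℝ → ℝ) (N : ℕ) : ℝ :=
  sSup {w | ∃ K : Fin N → Set ℝ, (∀ i, Feasible φ c (K i)) ∧ SW φ U K = w}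

/-- Price of Anarchy. -/
def PoA (φ : ℝ → ℝ) (c : ℝ) (U : ℕ → ℝ → ℝ) (N : ℕ) : ℝ :=
  SWmax φ c U N / SWNE φ c U N

lemma finUnion_meas {K : Set ℝ} (h : FinUnionIntervals K) : MeasurableSet K := by
  obtain ⟨n, a, b, rfl⟩ := h
  exact MeasurableSet.iUnion fun i => measurableSet_Icc

lemma numFirms_eq {N : ℕ} (K : Fin N → Set ℝ) (s : ℝ) :
    numFirms K s = ∑ i, (K i).indicator (fun _ => (1:ℕ)) s := by
  classical
  rw [numFirms, Nat.card_eq_fintype_card, Fintype.card_subtype, Finset.card_filter]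
  exact Finset.sum_congr rfl fun i _ => by by_cases h : s ∈ K i <;> simp [h]

lemma numFirms_cast {N : ℕ} (K : Fin N → Set ℝ) (s : ℝ) :
    ((numFirms K s : ℝ)) = ∑ i, (K i).indicator (fun _ => (1:ℝ)) s := by
  rw [numFirms_eq]
  push_cast
  exact Finset.sum_congr rfl fun i _ => by by_cases h : s ∈ K i <;> simp [h]

lemma measurable_numFirms {N : ℕ} {K : Fin N → Set ℝ} (hK : ∀ i, MeasurableSet (K i)) :
    Measurable (fun s => ((numFirms K s : ℝ))) := by
  simp only [numFirms_cast]
  exact Finset.measurable_sum _ fun i _ => (measurable_const.indicator (hK i))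

lemma numFirms_pos {N : ℕ} {K : Fin N → Set ℝ} {s : ℝ} (hs : s ∈ ⋃ i, K i) :
    0 < numFirms K s := by
  obtain ⟨i, hi⟩ := mem_iUnion.1 hs
  rw [numFirms_eq]
  exact Finset.sum_pos' (fun j _ => by positivity)
    ⟨i, Finset.mem_univ i, by simp [indicator_apply, hi]⟩

lemma numFirms_zero {N : ℕ} {K : Fin N → Set ℝ} {s : ℝ} (hs : s ∉ ⋃ i, K i) :
    numFirms K s = 0 := by
  rw [numFirms_eq, Finset.sum_eq_zero]
  intro i _
  simp only [mem_iUnion, not_exists] at hs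
  simp [indicator_apply, hs i]

variable {φ : ℝ → ℝ}

lemma integrable_sphi (hφm : Measurable φ) (hφI : IntegrableOn φ (Icc (0:ℝ) 1))
    {A : Set ℝ} (hA : MeasurableSet A) (hA1 : A ⊆ Icc (0:ℝ) 1) :
    IntegrableOn (fun s => s * φ s) A := by
  apply Integrable.mono' ((hφI.mono_set hA1).abs)
    (measurable_id.mul hφm).aestronglyMeasurable.restrict
  filter_upwards [ae_restrict_mem hA] with s hs
  have h1 := hA1 hs
  calc ‖s * φ s‖ = |s| * |φ s| := abs_mul _ _
    _ ≤ 1 * |φ s| := by gcongr; exact abs_le.2 ⟨by linarith [h1.1], h1.2⟩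
    _ = |φ s| := one_mul _

lemma sw_eq {N : ℕ} (K : Fin N → Set ℝ) (hφm : Measurable φ)
    (hφI : IntegrableOn φ (Icc (0:ℝ) 1))
    (hKm : ∀ i, MeasurableSet (K i)) (hKs : ∀ i, K i ⊆ Icc (0:ℝ) 1) :
    SW φ Ucorr K = ∫ s in (⋃ i, K i), s * φ s := by
  have hU : MeasurableSet (⋃ i, K i) := MeasurableSet.iUnion hKm
  set g : ℝ → ℝ := fun s => s / (numFirms K s : ℝ) * φ s with hg
  have hgm : Measurable g := (measurable_id.div (measurable_numFirms hKm)).mul hφm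
  have hgI : ∀ i, IntegrableOn g (K i) := by
    intro i
    apply Integrable.mono' ((hφI.mono_set (hKs i)).abs) hgm.aestronglyMeasurable.restrict
    filter_upwards [ae_restrict_mem (hKm i)] with s hs
    have h1 : s ∈ Icc (0:ℝ) 1 := hKs i hs
    have hM : 1 ≤ (numFirms K s : ℝ) := by
      exact_mod_cast numFirms_pos (mem_iUnion.2 ⟨i, hs⟩)
    have : |s / (numFirms K s : ℝ)| ≤ 1 := by
      rw [abs_div]
      rw [div_le_one (by positivity)]
      calc |s| ≤ 1 := abs_le.2 ⟨by linarith [h1.1], h1.2⟩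
        _ ≤ |(numFirms K s : ℝ)| := by rw [abs_of_nonneg (by positivity)]; exact hM
    calc ‖g s‖ = |s / (numFirms K s : ℝ)| * |φ s| := abs_mul _ _
      _ ≤ 1 * |φ s| := by gcongr
      _ = |φ s| := one_mul _
  have key : ∀ s, ∑ i, (K i).indicator g s = (⋃ i, K i).indicator (fun s => s * φ s) s := by
    intro s
    by_cases hs : s ∈ ⋃ i, K i
    · have hM : 0 < numFirms K s := numFirms_pos hs
      have : ∑ i, (K i).indicator g s = (numFirms K s : ℝ) * g s := by
        rw [numFirms_cast, Finset.sum_mul]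
        exact Finset.sum_congr rfl fun i _ => by
          by_cases h : s ∈ K i <;> simp [indicator_apply, h]
      rw [this, indicator_of_mem hs, hg]
      field_simp
    · rw [indicator_of_notMem hs, Finset.sum_eq_zero]
      intro i _
      simp only [mem_iUnion, not_exists] at hs
      simp [indicator_apply, hs i]
  calc SW φ Ucorr K = ∑ i, ∫ s, (K i).indicator g s := by
        refine Finset.sum_congr rfl fun i _ => ?_
        rw [integral_indicator (hKm i)]
        rfl
    _ = ∫ s, ∑ i, (K i).indicator g s := by
        rw [integral_finset_sum]
        intro i _
        exact (integrable_indicator_iff (hKm i)).2 (hgI i)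
    _ = ∫ s, (⋃ i, K i).indicator (fun s => s * φ s) s := by
        congr 1; funext s; exact key s
    _ = ∫ s in (⋃ i, K i), s * φ s := integral_indicator hU

lemma dMeas_union_le {N : ℕ} (K : Fin N → Set ℝ) (hφ0 : ∀ s ∈ Icc (0:ℝ) 1, 0 ≤ φ s)
    (hφI : IntegrableOn φ (Icc (0:ℝ) 1))
    (hKm : ∀ i, MeasurableSet (K i)) (hKs : ∀ i, K i ⊆ Icc (0:ℝ) 1) :
    dMeas φ (⋃ i, K i) ≤ ∑ i, dMeas φ (K i) := by
  have hU : MeasurableSet (⋃ i, K i) := MeasurableSet.iUnion hKm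
  have hUs : (⋃ i, K i) ⊆ Icc (0:ℝ) 1 := iUnion_subset hKs
  have h2 : ∫ s, (⋃ i, K i).indicator φ s ≤ ∫ s, ∑ i, (K i).indicator φ s := by
    apply integral_mono
    · exact (integrable_indicator_iff hU).2 (hφI.mono_set hUs)
    · exact integrable_finset_sum _ fun i _ =>
        (integrable_indicator_iff (hKm i)).2 (hφI.mono_set (hKs i))
    · intro s
      by_cases hs : s ∈ ⋃ i, K i
      · obtain ⟨j, hj⟩ := mem_iUnion.1 hs
        rw [indicator_of_mem hs]
        calc φ s = (K j).indicator φ s := (indicator_of_mem hj φ).symm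
          _ ≤ ∑ i, (K i).indicator φ s :=
            Finset.single_le_sum (f := fun i => (K i).indicator φ s)
              (fun i _ => indicator_nonneg (fun x hx => hφ0 x (hKs i hx)) s)
              (Finset.mem_univ j)
      · rw [indicator_of_notMem hs]
        exact Finset.sum_nonneg fun i _ =>
          indicator_nonneg (fun x hx => hφ0 x (hKs i hx)) s
  calc dMeas φ (⋃ i, K i) = ∫ s, (⋃ i, K i).indicator φ s := (integral_indicator hU).symm
    _ ≤ ∫ s, ∑ i, (K i).indicator φ s := h2
    _ = ∑ i, dMeas φ (K i) := by
        rw [integral_finset_sum _ fun i _ =>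
          (integrable_indicator_iff (hKm i)).2 (hφI.mono_set (hKs i))]
        exact Finset.sum_congr rfl fun i _ => integral_indicator (hKm i)

lemma integral_le_tail (hφm : Measurable φ)
    (hφI : IntegrableOn φ (Icc (0:ℝ) 1)) (hφ0 : ∀ s ∈ Icc (0:ℝ) 1, 0 ≤ φ s)
    {A : Set ℝ} (hA : MeasurableSet A) (hA1 : A ⊆ Icc (0:ℝ) 1)
    {t : ℝ} (ht : t ∈ Icc (0:ℝ) 1)
    (hm : dMeas φ A ≤ dMeas φ (Icc t 1)) :
    ∫ s in A, s * φ s ≤ ∫ s in Icc t 1, s * φ s := by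
  set B : Set ℝ := Icc t 1 with hBdef
  have hB : MeasurableSet B := measurableSet_Icc
  have hB1 : B ⊆ Icc (0:ℝ) 1 := Icc_subset_Icc ht.1 le_rfl
  have hφA := hφI.mono_set hA1
  have hφB := hφI.mono_set hB1
  have hsA := integrable_sphi hφm hφI hA hA1
  have hsB := integrable_sphi hφm hφI hB hB1
  have split : ∀ (f : ℝ → ℝ) (S : Set ℝ), MeasurableSet S → IntegrableOn f S →
      ∫ s in S, f s = (∫ s in S ∩ B, f s) + ∫ s in S \ B, f s := by
    intro f S hS hf
    rw [← setIntegral_union (disjoint_sdiff_self_right.mono_left inter_subset_right) (hS.diff hB)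
      (hf.mono_set inter_subset_left) (hf.mono_set diff_subset), Set.inter_union_diff]
  have split' : ∀ (f : ℝ → ℝ), IntegrableOn f B →
      ∫ s in B, f s = (∫ s in A ∩ B, f s) + ∫ s in B \ A, f s := by
    intro f hf
    rw [inter_comm A B, ← setIntegral_union
      (disjoint_sdiff_self_right.mono_left inter_subset_right) (hB.diff hA)
      (hf.mono_set inter_subset_left) (hf.mono_set diff_subset), Set.inter_union_diff]
  have e1 := split (fun s => s * φ s) A hA hsA
  have e2 : ∫ s in B, s * φ s = (∫ s in A ∩ B, s * φ s) + ∫ s in B \ A, s * φ s :=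
    split' (fun s => s * φ s) hsB
  have d1 := split φ A hA hφA
  have d2 : dMeas φ B = dMeas φ (A ∩ B) + dMeas φ (B \ A) := split' φ hφB
  have step3 : dMeas φ (A \ B) ≤ dMeas φ (B \ A) := by
    have : dMeas φ A = dMeas φ (A ∩ B) + dMeas φ (A \ B) := d1
    have h2 := d2
    linarith [hm]
  have step1 : ∫ s in A \ B, s * φ s ≤ t * dMeas φ (A \ B) := by
    rw [dMeas, ← integral_const_mul]
    apply setIntegral_mono_on (hsA.mono_set diff_subset)
      ((hφA.mono_set diff_subset).const_mul t) (hA.diff hB)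
    intro s hs
    have h1 := hA1 hs.1
    have hst : s ≤ t := by
      by_contra h
      exact hs.2 ⟨le_of_lt (not_le.1 h), h1.2⟩
    exact mul_le_mul_of_nonneg_right hst (hφ0 s h1)
  have step4 : t * dMeas φ (B \ A) ≤ ∫ s in B \ A, s * φ s := by
    rw [dMeas, ← integral_const_mul]
    apply setIntegral_mono_on ((hφB.mono_set diff_subset).const_mul t)
      (hsB.mono_set diff_subset) (hB.diff hA)
    intro s hs
    exact mul_le_mul_of_nonneg_right hs.1.1 (hφ0 s (hB1 hs.1))
  have tnn : (0:ℝ) ≤ t := ht.1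
  have := mul_le_mul_of_nonneg_left step3 tnn
  linarith

lemma psi_int (hφI : IntegrableOn φ (Icc (0:ℝ) 1)) :
    Integrable ((Icc (0:ℝ) 1).indicator φ) :=
  (integrable_indicator_iff measurableSet_Icc).2 hφI

lemma dMeas_Icc_eq (hφI : IntegrableOn φ (Icc (0:ℝ) 1)) {a b : ℝ}
    (ha : 0 ≤ a) (hab : a ≤ b) (hb : b ≤ 1) :
    dMeas φ (Icc a b) = ∫ x in a..b, (Icc (0:ℝ) 1).indicator φ x := by
  rw [dMeas, intervalIntegral.integral_of_le hab, ← integral_Icc_eq_integral_Ioc]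
  refine setIntegral_congr_fun measurableSet_Icc fun x hx => ?_
  have hx' := mem_Icc.1 hx
  exact (indicator_of_mem (mem_Icc.2 ⟨ha.trans hx'.1, hx'.2.trans hb⟩) φ).symm

lemma dMeas_tail_sub (hφI : IntegrableOn φ (Icc (0:ℝ) 1)) {a b : ℝ}
    (ha : 0 ≤ a) (hab : a ≤ b) (hb : b ≤ 1) :
    dMeas φ (Icc a b) = dMeas φ (Icc a 1) - dMeas φ (Icc b 1) := by
  have hψ := psi_int hφI
  rw [dMeas_Icc_eq hφI ha hab hb, dMeas_Icc_eq hφI ha (hab.trans hb) le_rfl,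
      dMeas_Icc_eq hφI (ha.trans hab) hb le_rfl]
  have := intervalIntegral.integral_add_adjacent_intervals (a := a) (b := b) (c := 1)
    (f := (Icc (0:ℝ) 1).indicator φ) (μ := volume)
    hψ.intervalIntegrable hψ.intervalIntegrable
  linarith

lemma tail_strictAntiOn (hφI : IntegrableOn φ (Icc (0:ℝ) 1))
    (hφpos : ∀ s ∈ Icc (0:ℝ) 1, 0 < φ s) :
    StrictAntiOn (fun x => dMeas φ (Icc x 1)) (Icc (0:ℝ) 1) := by
  intro x hx y hy hxy
  have hψ := psi_int hφI
  have h : dMeas φ (Icc x y) = dMeas φ (Icc x 1) - dMeas φ (Icc y 1) :=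
    dMeas_tail_sub hφI hx.1 hxy.le hy.2
  have pos : 0 < dMeas φ (Icc x y) := by
    rw [dMeas_Icc_eq hφI hx.1 hxy.le hy.2]
    apply intervalIntegral.intervalIntegral_pos_of_pos_on hψ.intervalIntegrable _ hxy
    intro z hz
    have hz1 : z ∈ Icc (0:ℝ) 1 := ⟨hx.1.trans hz.1.le, hz.2.le.trans hy.2⟩
    rw [indicator_of_mem hz1]
    exact hφpos z hz1
  simp only
  linarith

lemma exists_cut (hφI : IntegrableOn φ (Icc (0:ℝ) 1))
    (h1 : dMeas φ (Icc (0:ℝ) 1) = 1) {τ : ℝ} (hτ0 : 0 ≤ τ) (hτ1 : τ ≤ 1) :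
    ∃ t ∈ Icc (0:ℝ) 1, dMeas φ (Icc t 1) = τ := by
  have hψ := psi_int hφI
  have hcont : ContinuousOn (fun x => dMeas φ (Icc x 1)) (Icc (0:ℝ) 1) := by
    have heq : ∀ x ∈ Icc (0:ℝ) 1, ((∫ t in (0:ℝ)..1, (Icc (0:ℝ) 1).indicator φ t)
        - ∫ t in (0:ℝ)..x, (Icc (0:ℝ) 1).indicator φ t) = dMeas φ (Icc x 1) := by
      intro x hx
      have := intervalIntegral.integral_add_adjacent_intervals (a := (0:ℝ)) (b := x) (c := 1)
        (f := (Icc (0:ℝ) 1).indicator φ) (μ := volume)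
        hψ.intervalIntegrable hψ.intervalIntegrable
      rw [dMeas_Icc_eq hφI hx.1 hx.2 le_rfl]
      linarith
    exact ContinuousOn.congr
      ((continuous_const.sub (hψ.continuous_primitive 0)).continuousOn) fun x hx => (heq x hx).symm
  have hF1 : dMeas φ (Icc (1:ℝ) 1) = 0 := by
    rw [dMeas_Icc_eq hφI zero_le_one le_rfl le_rfl, intervalIntegral.integral_same]
  have := intermediate_value_Icc' (zero_le_one (α := ℝ)) hcont
  rw [hF1, h1] at this
  obtain ⟨t, ht, hFt⟩ := this ⟨hτ0, hτ1⟩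
  exact ⟨t, ht, hFt⟩

lemma t_chain (t : ℕ → ℝ) {N : ℕ} (hmono : ∀ i, i < N → t i ≤ t (i+1)) :
    ∀ {a b : ℕ}, a ≤ b → b ≤ N → t a ≤ t b := by
  intro a b hab hbN
  induction b with
  | zero => simp [Nat.le_zero.1 hab]
  | succ n ih =>
    rcases Nat.eq_or_lt_of_le hab with rfl | h
    · exact le_rfl
    · exact (ih (by omega) (by omega)).trans (hmono n (by omega))

lemma union_Icc (t : ℕ → ℝ) :
    ∀ N : ℕ, 1 ≤ N → (∀ i, i < N → t i ≤ t (i+1)) →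
    (⋃ i ∈ Finset.range N, Icc (t i) (t (i+1))) = Icc (t 0) (t N)
  | 1, _, _ => by simp
  | (n+2), _, hmono => by
    have ih := union_Icc t (n+1) (by omega) (fun i hi => hmono i (by omega))
    have ht0 : t 0 ≤ t (n+1) := t_chain t hmono (Nat.zero_le _) (by omega)
    rw [Finset.range_add_one, Finset.set_biUnion_insert, ih, union_comm,
      Set.Icc_union_Icc_eq_Icc ht0 (hmono (n+1) (by omega))]

lemma fin_union_eq (t : ℕ → ℝ) (N : ℕ) :
    (⋃ i : Fin N, Icc (t i) (t (i+1))) = ⋃ i ∈ Finset.range N, Icc (t i) (t (i+1)) := by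
  ext x
  simp only [mem_iUnion, Finset.mem_range]
  exact ⟨fun ⟨i, hx⟩ => ⟨i.val, i.isLt, hx⟩, fun ⟨i, hi, hx⟩ => ⟨⟨i, hi⟩, hx⟩⟩

lemma min_gap (k : ℕ) {c : ℝ} (hc : 0 ≤ c) :
    min (((k:ℝ)+1)*c) 1 - min ((k:ℝ)*c) 1 ≤ c := by
  have hk : (0:ℝ) ≤ (k:ℝ) := Nat.cast_nonneg k
  rcases le_total (((k:ℝ)+1)*c) 1 with h | h <;> rcases le_total ((k:ℝ)*c) 1 with h2 | h2
  · rw [min_eq_left h, min_eq_left h2]; nlinarith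
  · rw [min_eq_left h, min_eq_right h2]; nlinarith
  · rw [min_eq_right h, min_eq_left h2]; nlinarith
  · rw [min_eq_right h, min_eq_right h2]; linarith


/-- **Lemma (maximal social welfare, correlated rule).**
With `N` firms of capacity `c` and the correlated rule: if `N·c ≤ 1` and
`μ([s_{Nc}, 1]) = N·c`, then the supremum of social welfare over feasible
profiles equals `∫_{s_{Nc}}^1 s φ(s) ds` and is attained; if `N·c > 1`, the
supremum equals `E[S] = ∫₀¹ s φ(s) ds` and is attained. -/
theorem sw_max_correlated
    {N : ℕ} (hN : 2 ≤ N) (φ : ℝ → ℝ)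
    (hφm : Measurable φ) (hφpos : ∀ s ∈ Set.Icc (0:ℝ) 1, 0 < φ s)
    (hφint : ∫ s in Set.Icc (0:ℝ) 1, φ s = 1)
    (c : ℝ) (hc : 0 < c) (hc1 : c ≤ 1) :
    ((N : ℝ) * c ≤ 1 →
      ∀ sNc ∈ Set.Icc (0:ℝ) 1, dMeas φ (Set.Icc sNc 1) = (N : ℝ) * c →
        SWmax φ c Ucorr N = ∫ s in Set.Icc sNc 1, s * φ s ∧
        ∃ K : Fin N → Set ℝ, (∀ i, Feasible φ c (K i)) ∧
          SW φ Ucorr K = SWmax φ c Ucorr N) ∧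
    (1 < (N : ℝ) * c →
      SWmax φ c Ucorr N = ∫ s in Set.Icc (0:ℝ) 1, s * φ s ∧
      ∃ K : Fin N → Set ℝ, (∀ i, Feasible φ c (K i)) ∧
        SW φ Ucorr K = SWmax φ c Ucorr N) := by
  classical
  have hφI : IntegrableOn φ (Icc (0:ℝ) 1) := by
    by_contra h
    rw [integral_undef h] at hφint
    norm_num at hφint
  have hφ0 : ∀ s ∈ Icc (0:ℝ) 1, 0 ≤ φ s := fun s hs => (hφpos s hs).le
  have hd1 : dMeas φ (Icc (0:ℝ) 1) = 1 := hφint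
  have hNpos : 0 < N := by omega
  -- master claim
  have master : ∀ t0 ∈ Icc (0:ℝ) 1, dMeas φ (Icc t0 1) = min ((N:ℝ)*c) 1 →
      SWmax φ c Ucorr N = ∫ s in Icc t0 1, s * φ s ∧
      ∃ K : Fin N → Set ℝ, (∀ i, Feasible φ c (K i)) ∧ SW φ Ucorr K = SWmax φ c Ucorr N := by
    intro t0 ht0 hFt0
    -- cut points
    have hτmem : ∀ i : ℕ, min (((N - i : ℕ) : ℝ) * c) 1 ∈ Icc (0:ℝ) 1 :=
      fun i => ⟨le_min (by positivity) zero_le_one, min_le_right _ _⟩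
    choose t htmem htval using fun i : ℕ =>
      exists_cut hφI hd1 (hτmem i).1 (hτmem i).2
    have hτmono : ∀ i : ℕ, min (((N - (i+1) : ℕ) : ℝ) * c) 1 ≤ min (((N - i : ℕ) : ℝ) * c) 1 := by
      intro i
      apply min_le_min _ le_rfl
      have : ((N - (i+1) : ℕ) : ℝ) ≤ ((N - i : ℕ) : ℝ) := by
        exact_mod_cast Nat.sub_le_sub_left (Nat.le_succ i) N
      nlinarith
    have hmono : ∀ i, i < N → t i ≤ t (i+1) := by
      intro i hi
      by_contra h
      push_neg at h
      have hlt := tail_strictAntiOn hφI hφpos (htmem (i+1)) (htmem i) h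
      simp only at hlt
      rw [htval i, htval (i+1)] at hlt
      linarith [hτmono i]
    have hinj := (tail_strictAntiOn hφI hφpos).injOn
    have ht00 : t 0 = t0 := by
      apply hinj (htmem 0) ht0
      simp only
      rw [htval 0, hFt0]
      norm_num
    have htN : t N = 1 := by
      apply hinj (htmem N) (right_mem_Icc.2 zero_le_one)
      simp only
      rw [htval N]
      have h1 : dMeas φ (Icc (1:ℝ) 1) = 0 := by
        rw [dMeas_Icc_eq hφI zero_le_one le_rfl le_rfl, intervalIntegral.integral_same]
      rw [h1]
      simp
    -- the profile
    set K : Fin N → Set ℝ := fun i => Icc (t i.val) (t (i.val+1)) with hK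
    have hKm : ∀ i, MeasurableSet (K i) := fun i => measurableSet_Icc
    have hKs : ∀ i : Fin N, K i ⊆ Icc (0:ℝ) 1 :=
      fun i => Icc_subset_Icc (htmem i.val).1 (htmem (i.val+1)).2
    have hunion : (⋃ i, K i) = Icc t0 1 := by
      rw [hK]
      rw [fin_union_eq t N, union_Icc t N hNpos hmono, ht00, htN]
    have hfeas : ∀ i, Feasible φ c (K i) := by
      intro i
      refine ⟨hKs i, ⟨1, fun _ => t i.val, fun _ => t (i.val+1), by rw [hK]; simp [Set.iUnion_const]⟩, ?_⟩
      have hle := hmono i.val i.isLt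
      rw [hK]
      simp only
      rw [dMeas_tail_sub hφI (htmem i.val).1 hle (htmem (i.val+1)).2, htval, htval]
      have hnat : N - (i.val : ℕ) = (N - (i.val+1)) + 1 := by omega
      have hcast : ((N - (i.val:ℕ) : ℕ) : ℝ) = ((N - (i.val+1) : ℕ) : ℝ) + 1 := by
        rw [hnat]; push_cast; ring
      rw [hcast]
      exact min_gap _ hc.le
    have hSW : SW φ Ucorr K = ∫ s in Icc t0 1, s * φ s := by
      rw [sw_eq K hφm hφI hKm hKs, hunion]
    -- upper bound
    have hub : ∀ w ∈ {w | ∃ K : Fin N → Set ℝ,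
        (∀ i, Feasible φ c (K i)) ∧ SW φ Ucorr K = w}, w ≤ ∫ s in Icc t0 1, s * φ s := by
      rintro w ⟨K', hK', rfl⟩
      have hKm' : ∀ i, MeasurableSet (K' i) := fun i => finUnion_meas (hK' i).2.1
      have hKs' : ∀ i, K' i ⊆ Icc (0:ℝ) 1 := fun i => (hK' i).1
      have hU : MeasurableSet (⋃ i, K' i) := MeasurableSet.iUnion hKm'
      have hUs : (⋃ i, K' i) ⊆ Icc (0:ℝ) 1 := iUnion_subset hKs'
      rw [sw_eq K' hφm hφI hKm' hKs']
      apply integral_le_tail hφm hφI hφ0 hU hUs ht0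
      rw [hFt0]
      apply le_min
      · calc dMeas φ (⋃ i, K' i) ≤ ∑ i, dMeas φ (K' i) :=
              dMeas_union_le K' hφ0 hφI hKm' hKs'
          _ ≤ ∑ _i : Fin N, c := Finset.sum_le_sum fun i _ => (hK' i).2.2
          _ = (N:ℝ) * c := by
              rw [Finset.sum_const, Finset.card_univ, Fintype.card_fin, nsmul_eq_mul]
      · rw [← hd1]
        apply setIntegral_mono_set hφI
        · filter_upwards [ae_restrict_mem measurableSet_Icc] with s hs using hφ0 s hs
        · exact HasSubset.Subset.eventuallyLE hUs
    have hmax : SWmax φ c Ucorr N = ∫ s in Icc t0 1, s * φ s := by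
      apply IsGreatest.csSup_eq
      exact ⟨⟨K, hfeas, hSW⟩, fun w hw => hub w hw⟩
    exact ⟨hmax, K, hfeas, by rw [hmax, hSW]⟩
  constructor
  · intro hNc sNc hsNc hval
    exact master sNc hsNc (by rw [hval, min_eq_left hNc])
  · intro hNc
    have h0 : dMeas φ (Icc (0:ℝ) 1) = min ((N:ℝ)*c) 1 := by
      rw [hd1, min_eq_right hNc.le]
    exact master 0 (left_mem_Icc.2 zero_le_one) h0
end
end
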